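/- arXiv:2403.00392 — 6 statements merged into one kernel-verified Lean document; each statement's English description precedes it below -/
import Mathlib

section
/- Every sparse graph G=(V,E) admits exactly one max-tight decomposition: there exists a family {G_i=(V_i,E_i)}_{i∈I} of subgraphs of G that is a max-tight decomposition for G, and any two max-tight decompositions for G consist of the same set of subgraphs. -/
open scoped Classical

noncomputable section

/-- The squared distance function on `ℂ²`. -/
def sd (x y : ℂ × ℂ) : ℂ := (x.1 - y.1) ^ 2 + (x.2 - y.2) ^ 2

/-- Membership in the transformation group `T`. -/
def IsTransf (t : ℂ × ℂ → ℂ × ℂ) : Prop :=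
  ∃ c s u v : ℂ, c ^ 2 + s ^ 2 = 1 ∧
    ∀ x, t x = (c * x.1 - s * x.2 + u, s * x.1 + c * x.2 + v)

variable {α : Type*} [DecidableEq α]

/-- `(V, E)` is a finite simple undirected graph: edges are non-diagonal
unordered pairs with both endpoints in `V`. -/
def IsGraph (V : Finset α) (E : Finset (Sym2 α)) : Prop :=
  ∀ e ∈ E, ¬ e.IsDiag ∧ ∀ v ∈ e, v ∈ V

/-- `(V', E')` is a subgraph of `(V, E)`. -/
def IsSubgraph (V' : Finset α) (E' : Finset (Sym2 α))
    (V : Finset α) (E : Finset (Sym2 α)) : Prop :=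
  IsGraph V' E' ∧ V' ⊆ V ∧ E' ⊆ E

/-- A graph is sparse if every subgraph `(V', E')` with `|V'| ≥ 2`
satisfies `|E'| ≤ 2|V'| - 3`. -/
def IsSparse (V : Finset α) (E : Finset (Sym2 α)) : Prop :=
  IsGraph V E ∧ ∀ V' E', IsSubgraph V' E' V E → 2 ≤ V'.card →
    (E'.card : ℤ) ≤ 2 * V'.card - 3

/-- A graph is tight if it is sparse and `|V| = 1` or `|E| = 2|V| - 3`. -/
def IsTight (V : Finset α) (E : Finset (Sym2 α)) : Prop :=
  IsSparse V E ∧ (V.card = 1 ∨ (E.card : ℤ) = 2 * V.card - 3)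

/-- `(V', E')` is a max-tight subgraph of `(V, E)`. -/
def IsMaxTight (V' : Finset α) (E' : Finset (Sym2 α))
    (V : Finset α) (E : Finset (Sym2 α)) : Prop :=
  IsSubgraph V' E' V E ∧ IsTight V' E' ∧
    ∀ V'' E'', IsSubgraph V'' E'' V E → IsTight V'' E'' →
      V' ⊆ V'' → E' ⊆ E'' → V' = V'' ∧ E' = E''

/-- `{(Vi i, Ei i)}_{i ∈ I}` is a max-tight decomposition of `(V, E)`. -/
def IsMaxTightDecomp {I : Type*} (V : Finset α) (E : Finset (Sym2 α))
    (Vi : I → Finset α) (Ei : I → Finset (Sym2 α)) : Prop :=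
  (∀ i, IsMaxTight (Vi i) (Ei i) V E) ∧
  (∀ v ∈ V, ∃ i, v ∈ Vi i) ∧
  (∀ e ∈ E, ∃ i, e ∈ Ei i) ∧
  (∀ i j, i ≠ j → ∀ e, ¬ (e ∈ Ei i ∧ e ∈ Ei j))

/-- Extend a realization of `V` to all of `α` (by zero off `V`). -/
def extendR (V : Finset α) (r : ↥V → ℂ × ℂ) : α → ℂ × ℂ :=
  fun a => if h : a ∈ V then r ⟨a, h⟩ else 0

/-- The squared distance along an unordered pair of vertices. -/
def edgeVal (r : α → ℂ × ℂ) : Sym2 α → ℂ :=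
  Sym2.lift ⟨fun u v => sd (r u) (r v), fun u v => by simp only [sd]; ring⟩

/-- The edge map `E_G : (ℂ²)^V → ℂ^E`. -/
def edgeMap (V : Finset α) (E : Finset (Sym2 α)) (r : ↥V → ℂ × ℂ) :
    {e // e ∈ E} → ℂ :=
  fun e => edgeVal (extendR V r) e.1

/-- The set `E_G⁻¹(λ)` of `λ`-compatible realizations. -/
def fiber (V : Finset α) (E : Finset (Sym2 α)) (lam : {e // e ∈ E} → ℂ) :
    Set (↥V → ℂ × ℂ) :=
  {r | edgeMap V E r = lam}

/-- The set of equivalence classes of `S` under `r ∼ s ↔ ∃ t ∈ T, s = t ∘ r`. -/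
def TClasses {β : Type*} (S : Set (β → ℂ × ℂ)) : Set (Set (β → ℂ × ℂ)) :=
  {C | ∃ r ∈ S, C = {s | s ∈ S ∧ ∃ t, IsTransf t ∧ s = fun v => t (r v)}}

/-- The coordinates of a realization, as a point of affine space with
coordinate ring `ℂ[x_v, y_v : v ∈ β]`. -/
def coords {β : Type*} (r : β → ℂ × ℂ) : β × Fin 2 → ℂ :=
  fun p => if p.2 = 0 then (r p.1).1 else (r p.1).2

/-- The vanishing ideal of a set of realizations in `ℂ[x_v, y_v : v ∈ β]`. -/
def vanishingIdeal {β : Type*} (S : Set (β → ℂ × ℂ)) :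
    Ideal (MvPolynomial (β × Fin 2) ℂ) where
  carrier := {f | ∀ r ∈ S, MvPolynomial.eval (coords r) f = 0}
  add_mem' := by
    intro a b ha hb r hr
    simp only [Set.mem_setOf_eq] at ha hb ⊢
    simp [map_add, ha r hr, hb r hr]
  zero_mem' := by intro r hr; simp
  smul_mem' := by
    intro c f hf r hr
    simp only [Set.mem_setOf_eq] at hf ⊢
    simp [smul_eq_mul, map_mul, hf r hr]

end

/-!
The union of two tight subgraphs meeting in at least two vertices is again tight: by
inclusion–exclusion its edge count is at least `2|V| - 3`, because sparsity bounds the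
intersection by `2|V₁ ∩ V₂| - 3`. Hence two max-tight subgraphs sharing an edge coincide. Every
vertex and every edge spans a tight subgraph, which extends to a max-tight one, so the max-tight
subgraphs of a sparse graph form a max-tight decomposition. Conversely every max-tight subgraph
occurs in every decomposition: one with an edge is the piece containing that edge, and an
edgeless one is a single vertex, hence maximal among the tight subgraphs and equal to the piece
containing it.
-/

section MaxTight

variable {α : Type*} {V V' V₁ V₂ W : Finset α} {E E' E₁ E₂ F : Finset (Sym2 α)}

lemma IsSubgraph.trans (h : IsSubgraph V' E' W F) (h' : IsSubgraph W F V E) :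
    IsSubgraph V' E' V E :=
  ⟨h.1, h.2.1.trans h'.2.1, h.2.2.trans h'.2.2⟩

lemma IsSparse.of_isSubgraph (hs : IsSparse V E) (h : IsSubgraph V' E' V E) : IsSparse V' E' :=
  ⟨h.1, fun V'' E'' h'' hcard => hs.2 V'' E'' (h''.trans h) hcard⟩

lemma IsGraph.union [DecidableEq α] (h₁ : IsGraph V₁ E₁) (h₂ : IsGraph V₂ E₂) :
    IsGraph (V₁ ∪ V₂) (E₁ ∪ E₂) := by
  intro e he
  rcases Finset.mem_union.1 he with he | he
  · exact ⟨(h₁ e he).1, fun v hv => Finset.mem_union_left _ ((h₁ e he).2 v hv)⟩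
  · exact ⟨(h₂ e he).1, fun v hv => Finset.mem_union_right _ ((h₂ e he).2 v hv)⟩

lemma IsGraph.inter [DecidableEq α] (h₁ : IsGraph V₁ E₁) (h₂ : IsGraph V₂ E₂) :
    IsGraph (V₁ ∩ V₂) (E₁ ∩ E₂) := by
  intro e he
  obtain ⟨he₁, he₂⟩ := Finset.mem_inter.1 he
  exact ⟨(h₁ e he₁).1, fun v hv => Finset.mem_inter.2 ⟨(h₁ e he₁).2 v hv, (h₂ e he₂).2 v hv⟩⟩

lemma IsSubgraph.union [DecidableEq α] (h₁ : IsSubgraph V₁ E₁ V E) (h₂ : IsSubgraph V₂ E₂ V E) :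
    IsSubgraph (V₁ ∪ V₂) (E₁ ∪ E₂) V E :=
  ⟨h₁.1.union h₂.1, Finset.union_subset h₁.2.1 h₂.2.1, Finset.union_subset h₁.2.2 h₂.2.2⟩

lemma IsGraph.two_le_card {e : Sym2 α} (h : IsGraph V E) (he : e ∈ E) : 2 ≤ V.card := by
  induction e with
  | h a b =>
    obtain ⟨hnd, hmem⟩ := h _ he
    exact Finset.one_lt_card.2 ⟨a, hmem a (Sym2.mem_mk_left a b), b,
      hmem b (Sym2.mem_mk_right a b), by simpa using hnd⟩

lemma IsTight.card_edges (ht : IsTight V E) (hV : 2 ≤ V.card) :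
    (E.card : ℤ) = 2 * V.card - 3 :=
  ht.2.resolve_left (by omega)

lemma IsTight.union [DecidableEq α] (ht₁ : IsTight V₁ E₁) (ht₂ : IsTight V₂ E₂)
    (hs : IsSparse (V₁ ∪ V₂) (E₁ ∪ E₂)) (hcap : 2 ≤ (V₁ ∩ V₂).card) :
    IsTight (V₁ ∪ V₂) (E₁ ∪ E₂) := by
  have hinter : IsSubgraph (V₁ ∩ V₂) (E₁ ∩ E₂) (V₁ ∪ V₂) (E₁ ∪ E₂) :=
    ⟨ht₁.1.1.inter ht₂.1.1, Finset.inter_subset_union, Finset.inter_subset_union⟩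
  have hE₁ := ht₁.card_edges (hcap.trans (Finset.card_le_card Finset.inter_subset_left))
  have hE₂ := ht₂.card_edges (hcap.trans (Finset.card_le_card Finset.inter_subset_right))
  have hE_inter := hs.2 _ _ hinter hcap
  have hE_union := hs.2 _ _ ⟨hs.1, subset_rfl, subset_rfl⟩
    (hcap.trans (Finset.card_le_card Finset.inter_subset_union))
  have hV_card : ((V₁ ∪ V₂).card : ℤ) + (V₁ ∩ V₂).card = V₁.card + V₂.card := by
    exact_mod_cast Finset.card_union_add_card_inter V₁ V₂
  have hE_card : ((E₁ ∪ E₂).card : ℤ) + (E₁ ∩ E₂).card = E₁.card + E₂.card := by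
    exact_mod_cast Finset.card_union_add_card_inter E₁ E₂
  exact ⟨hs, Or.inr (by omega)⟩

lemma IsMaxTight.eq_of_mem_edges (hs : IsSparse V E) (h₁ : IsMaxTight V₁ E₁ V E)
    (h₂ : IsMaxTight V₂ E₂ V E) {e : Sym2 α} (he₁ : e ∈ E₁) (he₂ : e ∈ E₂) :
    V₁ = V₂ ∧ E₁ = E₂ := by
  have hsub := h₁.1.union h₂.1
  have htight := h₁.2.1.union h₂.2.1 (hs.of_isSubgraph hsub)
    ((h₁.1.1.inter h₂.1.1).two_le_card (Finset.mem_inter.2 ⟨he₁, he₂⟩))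
  obtain ⟨hV₁, hE₁⟩ := h₁.2.2 _ _ hsub htight Finset.subset_union_left Finset.subset_union_left
  obtain ⟨hV₂, hE₂⟩ := h₂.2.2 _ _ hsub htight Finset.subset_union_right Finset.subset_union_right
  exact ⟨hV₁.trans hV₂.symm, hE₁.trans hE₂.symm⟩

lemma finite_setOf_isSubgraph (V : Finset α) (E : Finset (Sym2 α)) :
    {p : Finset α × Finset (Sym2 α) | IsSubgraph p.1 p.2 V E}.Finite :=
  (V.powerset ×ˢ E.powerset).finite_toSet.subset fun _ hp => by
    simpa using ⟨hp.2.1, hp.2.2⟩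

lemma IsTight.exists_isMaxTight (ht : IsTight V' E') (hsub : IsSubgraph V' E' V E) :
    ∃ W F, IsMaxTight W F V E ∧ V' ⊆ W ∧ E' ⊆ F := by
  have hfin : {p : Finset α × Finset (Sym2 α) |
      IsSubgraph p.1 p.2 V E ∧ IsTight p.1 p.2 ∧ (V', E') ≤ p}.Finite :=
    (finite_setOf_isSubgraph V E).subset fun _ hp => hp.1
  obtain ⟨⟨W, F⟩, ⟨hsub', ht', hle⟩, hmax⟩ := hfin.exists_maximal ⟨(V', E'), hsub, ht, le_rfl⟩
  refine ⟨W, F, ⟨hsub', ht', fun V'' E'' hsub'' ht'' hW hF => ?_⟩, hle.1, hle.2⟩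
  have hle'' : ((W, F) : Finset α × Finset (Sym2 α)) ≤ (V'', E'') := ⟨hW, hF⟩
  have hge := hmax ⟨hsub'', ht'', hle.trans hle''⟩ hle''
  exact ⟨le_antisymm hW hge.1, le_antisymm hF hge.2⟩

lemma isTight_singleton (v : α) : IsTight {v} ∅ := by
  refine ⟨⟨fun e he => absurd he (Finset.notMem_empty e), fun V' E' h hcard => ?_⟩,
    Or.inl (Finset.card_singleton v)⟩
  have hV := Finset.card_le_card h.2.1
  rw [Finset.card_singleton] at hV
  omega

lemma isTight_pair [DecidableEq α] {u v : α} (huv : u ≠ v) : IsTight {u, v} {s(u, v)} := by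
  have hgraph : IsGraph {u, v} {s(u, v)} := by
    intro e he
    rw [Finset.mem_singleton] at he
    subst he
    exact ⟨by simpa using huv, fun w hw => by rcases Sym2.mem_iff.1 hw with rfl | rfl <;> simp⟩
  refine ⟨⟨hgraph, fun V' E' h _ => ?_⟩, Or.inr ?_⟩
  · have hV := Finset.card_le_card h.2.1
    have hE := Finset.card_le_card h.2.2
    rw [Finset.card_pair huv] at hV
    rw [Finset.card_singleton] at hE
    omega
  · rw [Finset.card_pair huv, Finset.card_singleton]
    norm_num

lemma exists_isMaxTight_mem_vertices {v : α} (hv : v ∈ V) :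
    ∃ W F, IsMaxTight W F V E ∧ v ∈ W := by
  obtain ⟨W, F, hmt, hW, -⟩ := (isTight_singleton v).exists_isMaxTight
    ⟨(isTight_singleton v).1.1, Finset.singleton_subset_iff.2 hv, Finset.empty_subset E⟩
  exact ⟨W, F, hmt, hW (Finset.mem_singleton_self v)⟩

lemma IsGraph.exists_isMaxTight_mem_edges {e : Sym2 α} (hG : IsGraph V E) (he : e ∈ E) :
    ∃ W F, IsMaxTight W F V E ∧ e ∈ F := by
  induction e with
  | h u v =>
    obtain ⟨hnd, hmem⟩ := hG _ he
    have ht := isTight_pair (by simpa using hnd : u ≠ v)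
    obtain ⟨W, F, hmt, -, hF⟩ := ht.exists_isMaxTight
      ⟨ht.1.1, Finset.insert_subset_iff.2 ⟨hmem u (Sym2.mem_mk_left u v),
        Finset.singleton_subset_iff.2 (hmem v (Sym2.mem_mk_right u v))⟩,
        Finset.singleton_subset_iff.2 he⟩
    exact ⟨W, F, hmt, hF (Finset.mem_singleton_self _)⟩

def maxTightSubgraphs (V : Finset α) (E : Finset (Sym2 α)) : Set (Finset α × Finset (Sym2 α)) :=
  {p | IsMaxTight p.1 p.2 V E}

lemma finite_maxTightSubgraphs (V : Finset α) (E : Finset (Sym2 α)) :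
    (maxTightSubgraphs V E).Finite :=
  (finite_setOf_isSubgraph V E).subset fun _ hp => hp.1

variable {I : Type*} {Vi : I → Finset α} {Ei : I → Finset (Sym2 α)}

lemma IsMaxTightDecomp.exists_eq_of_isMaxTight (hs : IsSparse V E)
    (hd : IsMaxTightDecomp V E Vi Ei) (hmt : IsMaxTight W F V E) :
    ∃ i, Vi i = W ∧ Ei i = F := by
  obtain rfl | ⟨e, he⟩ := F.eq_empty_or_nonempty
  · obtain ⟨v, rfl⟩ := Finset.card_eq_one.1 (hmt.2.1.2.resolve_right (by simp; omega))
    obtain ⟨i, hi⟩ := hd.2.1 v (hmt.1.2.1 (Finset.mem_singleton_self v))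
    obtain ⟨hV, hE⟩ := hmt.2.2 _ _ (hd.1 i).1 (hd.1 i).2.1
      (Finset.singleton_subset_iff.2 hi) (Finset.empty_subset _)
    exact ⟨i, hV.symm, hE.symm⟩
  · obtain ⟨i, hi⟩ := hd.2.2.1 e (hmt.1.2.2 he)
    exact ⟨i, (hd.1 i).eq_of_mem_edges hs hmt hi he⟩

lemma IsMaxTightDecomp.range_eq (hs : IsSparse V E) (hd : IsMaxTightDecomp V E Vi Ei) :
    Set.range (fun i => (Vi i, Ei i)) = maxTightSubgraphs V E := by
  ext ⟨W, F⟩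
  refine ⟨?_, fun hmt => ?_⟩
  · rintro ⟨i, hi⟩
    simpa [maxTightSubgraphs, ← hi] using hd.1 i
  · obtain ⟨i, hV, hE⟩ := hd.exists_eq_of_isMaxTight hs hmt
    exact ⟨i, Prod.ext hV hE⟩

lemma isMaxTightDecomp_of_range_eq (hs : IsSparse V E)
    (hinj : Function.Injective fun i => (Vi i, Ei i))
    (hrange : Set.range (fun i => (Vi i, Ei i)) = maxTightSubgraphs V E) :
    IsMaxTightDecomp V E Vi Ei := by
  have hmt : ∀ i, IsMaxTight (Vi i) (Ei i) V E := fun i =>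
    (hrange ▸ Set.mem_range_self i : (Vi i, Ei i) ∈ maxTightSubgraphs V E)
  have mem_range : ∀ {W F}, IsMaxTight W F V E → ∃ i, Vi i = W ∧ Ei i = F := by
    intro W F hW
    have hWF : (W, F) ∈ maxTightSubgraphs V E := hW
    obtain ⟨i, hi⟩ := hrange ▸ hWF
    exact ⟨i, Prod.ext_iff.1 hi⟩
  refine ⟨hmt, fun v hv => ?_, fun e he => ?_, fun i j hij e ⟨hi, hj⟩ => ?_⟩
  · obtain ⟨W, F, hW, hvW⟩ := exists_isMaxTight_mem_vertices (E := E) hv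
    obtain ⟨i, rfl, -⟩ := mem_range hW
    exact ⟨i, hvW⟩
  · obtain ⟨W, F, hW, heF⟩ := hs.1.exists_isMaxTight_mem_edges he
    obtain ⟨i, -, rfl⟩ := mem_range hW
    exact ⟨i, heF⟩
  · obtain ⟨hV, hE⟩ := (hmt i).eq_of_mem_edges hs (hmt j) hi hj
    exact hij (hinj (Prod.ext hV hE))

end MaxTight

theorem maxTight_decomposition_exists_unique_general
    {α : Type*}
    (V : Finset α) (E : Finset (Sym2 α)) (hSparse : IsSparse V E) :
    (∃ (I : Type) (_ : Fintype I) (Vi : I → Finset α) (Ei : I → Finset (Sym2 α)),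
        IsMaxTightDecomp V E Vi Ei) ∧
    (∀ {I J : Type} (Vi : I → Finset α) (Ei : I → Finset (Sym2 α))
        (Wj : J → Finset α) (Fj : J → Finset (Sym2 α)),
        IsMaxTightDecomp V E Vi Ei → IsMaxTightDecomp V E Wj Fj →
        Set.range (fun i => (Vi i, Ei i)) = Set.range (fun j => (Wj j, Fj j))) := by
  refine ⟨?_, fun Vi Ei Wj Fj hd₁ hd₂ => by rw [hd₁.range_eq hSparse, hd₂.range_eq hSparse]⟩
  have := (finite_maxTightSubgraphs V E).to_subtype
  let e := (Finite.equivFin (maxTightSubgraphs V E)).symm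
  refine ⟨_, inferInstance, fun i => (e i).1.1, fun i => (e i).1.2,
    isMaxTightDecomp_of_range_eq hSparse ?_ ?_⟩
  · exact Subtype.val_injective.comp e.injective
  · exact (e.surjective.range_comp Subtype.val).trans Subtype.range_coe

/-- Every sparse graph admits a max-tight decomposition, and
any two max-tight decompositions consist of the same set of subgraphs. -/
theorem maxTight_decomposition_exists_unique
    {α : Type*} [DecidableEq α]
    (V : Finset α) (E : Finset (Sym2 α)) (hSparse : IsSparse V E) :
    (∃ (I : Type) (_ : Fintype I) (Vi : I → Finset α) (Ei : I → Finset (Sym2 α)),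
        IsMaxTightDecomp V E Vi Ei) ∧
    (∀ {I J : Type} (Vi : I → Finset α) (Ei : I → Finset (Sym2 α))
        (Wj : J → Finset α) (Fj : J → Finset (Sym2 α)),
        IsMaxTightDecomp V E Vi Ei → IsMaxTightDecomp V E Wj Fj →
        Set.range (fun i => (Vi i, Ei i)) = Set.range (fun j => (Wj j, Fj j))) :=
  maxTight_decomposition_exists_unique_general V E hSparse
end

section
/- If G=(V,E) is a graph that is not sparse, then there exists a nonzero polynomial F in the variables (x_e)_{e∈E} over ℂ such that for every λ ∈ ℂ^E with F(λ) ≠ 0 the set E_G⁻¹(λ) of λ-compatible realizations is empty. -/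
open scoped Classical

/-! A non-sparse graph contains a subgraph `(V', E')` with `|E'| ≥ 2|V'| - 2`. In the isotropic
coordinates `z = x₁ + i x₂`, `w = x₁ - i x₂` its squared edge lengths are the polynomials
`(z u - z v) (w u - w v)`. These are invariant under translations and under `z ↦ t z, w ↦ t⁻¹ w`,
and in the fraction field they are polynomials in the `2|V'| - 3` invariants
`(z u - z v₀) / (z v₁ - z v₀)`, `(w u - w v₀) (z v₁ - z v₀)`. Being more numerous than the
transcendence degree of what they generate, they satisfy a nonzero polynomial relation `F`, and
`F` vanishes on the image of the edge map. -/

open MvPolynomial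

theorem AlgebraicIndependent.card_le_card_of_forall_mem_adjoin
    {R A ι : Type*} [CommRing R] [IsDomain R] [CommRing A] [Algebra R A] [Fintype ι]
    {x : ι → A} (hx : AlgebraicIndependent R x) (s : Finset A)
    (hs : ∀ i, x i ∈ Algebra.adjoin R (s : Set A)) : Fintype.card ι ≤ s.card := by
  simp_rw [Algebra.adjoin_eq_range, AlgHom.mem_range] at hs
  choose y hy using hs
  have hy' : AlgebraicIndependent R y :=
    .of_comp (aeval Subtype.val) (by convert hx; exact funext hy)
  simpa only [Cardinal.mk_fintype, Cardinal.lift_natCast, SetLike.coe_sort_coe,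
    MvPolynomial.trdeg_of_isDomain, Fintype.card_coe, Nat.cast_le] using
    hy'.lift_cardinalMk_le_trdeg

theorem exists_finset_mul_sub_mem_adjoin {k K α : Type*} [CommRing k] [Field K] [Algebra k K]
    (z w : α → K) {V : Finset α} {v₀ v₁ : α} (h₀ : v₀ ∈ V) (h₁ : v₁ ∈ V) (hz : z v₁ ≠ z v₀) :
    ∃ s : Finset K, s.card + 3 ≤ 2 * V.card ∧
      ∀ u ∈ V, ∀ v ∈ V, (z u - z v) * (w u - w v) ∈ Algebra.adjoin k (s : Set K) := by
  have hv : v₁ ≠ v₀ := fun h => hz (congrArg z h)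
  have hd : z v₁ - z v₀ ≠ 0 := sub_ne_zero.mpr hz
  set a : α → K := fun u => (z u - z v₀) / (z v₁ - z v₀)
  set b : α → K := fun u => (w u - w v₀) * (z v₁ - z v₀)
  set s := ((V.erase v₀).erase v₁).image a ∪ (V.erase v₀).image b
  refine ⟨s, ?_, ?_⟩
  · have h₁' : v₁ ∈ V.erase v₀ := Finset.mem_erase.mpr ⟨hv, h₁⟩
    calc s.card + 3 ≤ ((V.erase v₀).erase v₁).card + (V.erase v₀).card + 3 := by
          gcongr
          exact (Finset.card_union_le _ _).trans
            (add_le_add Finset.card_image_le Finset.card_image_le)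
      _ = 2 * V.card := by
          have := Finset.card_erase_add_one h₀
          have := Finset.card_erase_add_one h₁'
          omega
  have ha : ∀ u ∈ V, a u ∈ Algebra.adjoin k (s : Set K) := by
    intro u hu
    by_cases hu₀ : u = v₀
    · simp [a, hu₀]
    by_cases hu₁ : u = v₁
    · simp [a, hu₁, hd]
    refine Algebra.subset_adjoin (Finset.mem_union_left _ (Finset.mem_image_of_mem a ?_))
    simp [hu, hu₀, hu₁]
  have hb : ∀ u ∈ V, b u ∈ Algebra.adjoin k (s : Set K) := by
    intro u hu
    by_cases hu₀ : u = v₀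
    · simp [b, hu₀]
    refine Algebra.subset_adjoin (Finset.mem_union_right _ (Finset.mem_image_of_mem b ?_))
    simp [hu, hu₀]
  intro u hu v hv
  have : (z u - z v) * (w u - w v) = (a u - a v) * (b u - b v) := by
    simp only [a, b]; field_simp; ring
  rw [this]
  exact Subalgebra.mul_mem _ (Subalgebra.sub_mem _ (ha u hu) (ha v hv))
    (Subalgebra.sub_mem _ (hb u hu) (hb v hv))

section EdgePoly

variable {α : Type*}

noncomputable def edgePoly (R : Type*) [CommRing R] : Sym2 α → MvPolynomial (α × Fin 2) R :=
  Sym2.lift ⟨fun u v => (X (u, 0) - X (v, 0)) * (X (u, 1) - X (v, 1)), fun _ _ => by ring⟩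

theorem edgePoly_mk {R : Type*} [CommRing R] (u v : α) :
    edgePoly R s(u, v) = (X (u, 0) - X (v, 0)) * (X (u, 1) - X (v, 1)) :=
  Sym2.lift_mk ..

theorem not_algebraicIndependent_edgePoly {k : Type*} [CommRing k] [IsDomain k] {V : Finset α}
    {E : Finset (Sym2 α)} (hE : ∀ e ∈ E, ∀ v ∈ e, v ∈ V) (hV : 2 ≤ V.card)
    (hdense : 2 * V.card ≤ E.card + 2) :
    ¬ AlgebraicIndependent k (fun e : E => edgePoly k e.1) := by
  intro hind
  obtain ⟨v₀, h₀, v₁, h₁, hv⟩ := Finset.one_lt_card.mp hV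
  let K := FractionRing (MvPolynomial (α × Fin 2) k)
  let toK := IsScalarTower.toAlgHom k (MvPolynomial (α × Fin 2) k) K
  have hK : Function.Injective toK := IsFractionRing.injective _ K
  have hz : toK (X (v₁, 0)) ≠ toK (X (v₀, 0)) := hK.ne (X_injective.ne (by simp [Ne.symm hv]))
  obtain ⟨s, hs, hmem⟩ := exists_finset_mul_sub_mem_adjoin (k := k)
    (fun u => toK (X (u, 0))) (fun u => toK (X (u, 1))) h₀ h₁ hz
  have := (hind.map' hK).card_le_card_of_forall_mem_adjoin s <| by
    rintro ⟨e, he⟩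
    induction e using Sym2.ind with
    | _ u v =>
      simpa [edgePoly_mk] using
        hmem u (hE _ he u (Sym2.mem_mk_left u v)) v (hE _ he v (Sym2.mem_mk_right u v))
  simp only [Fintype.card_coe] at this
  omega

def isotropicCoords (r : α → ℂ × ℂ) : α × Fin 2 → ℂ :=
  fun p => ![(r p.1).1 + Complex.I * (r p.1).2, (r p.1).1 - Complex.I * (r p.1).2] p.2

theorem eval_isotropicCoords_edgePoly (r : α → ℂ × ℂ) (e : Sym2 α) :
    eval (isotropicCoords r) (edgePoly ℂ e) = edgeVal r e := by
  induction e using Sym2.ind with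
  | _ u v =>
    simp only [edgePoly_mk, edgeVal, Sym2.lift_mk, sd, isotropicCoords, map_mul, map_sub, eval_X]
    simp only [Matrix.cons_val_zero, Matrix.cons_val_one]
    linear_combination (-((r u).2 - (r v).2) ^ 2) * Complex.I_sq

end EdgePoly

theorem exists_dense_subgraph_of_not_isSparse {α : Type*} [DecidableEq α] {V : Finset α}
    {E : Finset (Sym2 α)} (hG : IsGraph V E) (hns : ¬ IsSparse V E) :
    ∃ V' E', IsSubgraph V' E' V E ∧ 2 ≤ V'.card ∧ 2 * V'.card ≤ E'.card + 2 := by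
  simp only [IsSparse, hG, true_and, not_forall, not_le] at hns
  obtain ⟨V', E', hsub, hV', hE'⟩ := hns
  exact ⟨V', E', hsub, hV', by omega⟩

/-- If a graph is not sparse, then for a general edge length
assignment `λ` the set of `λ`-compatible realizations is empty. -/
theorem not_sparse_general_fiber_empty
    {α : Type*} [DecidableEq α]
    (V : Finset α) (E : Finset (Sym2 α))
    (hGraph : IsGraph V E) (hns : ¬ IsSparse V E) :
    ∃ F : MvPolynomial {e // e ∈ E} ℂ, F ≠ 0 ∧
      ∀ lam : {e // e ∈ E} → ℂ, MvPolynomial.eval lam F ≠ 0 →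
        fiber V E lam = ∅ := by
  obtain ⟨V', E', ⟨hG', -, hE'⟩, hV', hdense⟩ :=
    exists_dense_subgraph_of_not_isSparse hGraph hns
  obtain ⟨F, hFP, hF⟩ : ∃ F, aeval (fun e : E' => edgePoly ℂ e.1) F = 0 ∧ F ≠ 0 := by
    have := not_algebraicIndependent_edgePoly (k := ℂ) (fun e he => (hG' e he).2) hV' hdense
    rw [algebraicIndependent_iff] at this
    push Not at this
    exact this
  let incl : E' → E := Subtype.map id hE'
  have hincl : Function.Injective incl := Subtype.map_injective _ Function.injective_id
  refine ⟨rename incl F, (rename_injective incl hincl).ne_iff.mpr hF, fun lam hlam => ?_⟩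
  refine Set.eq_empty_of_forall_notMem fun r hr => hlam ?_
  have hlam' : lam ∘ incl = fun e => aeval (isotropicCoords (extendR V r)) (edgePoly ℂ e.1) :=
    funext fun e => (congrFun hr (incl e)).symm.trans (eval_isotropicCoords_edgePoly _ _).symm
  calc eval lam (rename incl F) = eval (lam ∘ incl) F := eval_rename ..
    _ = aeval (isotropicCoords (extendR V r)) (aeval (fun e : E' => edgePoly ℂ e.1) F) := by
      rw [hlam', comp_aeval_apply]; rfl
    _ = 0 := by rw [hFP, map_zero]
end

section
/- Let B and A be commutative integral domains and let B → A be an injective ring homomorphism making A a B-algebra. If the tensor product A ⊗_B A is an integral domain, then Frac(A) ⊗_{Frac(B)} Frac(A) is an integral domain, where Frac denotes the field of fractions and Frac(A) is regarded as a Frac(B)-algebra via the embedding Frac(B) → Frac(A) induced by B → A. -/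
open scoped TensorProduct

/-! Inverting the nonzero elements of `A` in one tensor factor of `A ⊗[B] A` and then in the
other yields `L ⊗[B] L`; each step localizes a domain at nonzero elements (detected by
multiplying out into `L`), so `L ⊗[B] L` is a domain. Since `K` is a localization of `B`,
`L ⊗[K] L = L ⊗[B] L`. -/

namespace Algebra.TensorProduct

theorem one_tmul_ne_zero_of_map_ne_zero {R S A T : Type*} [CommSemiring R] [CommSemiring S]
    [CommSemiring A] [CommSemiring T] [Algebra R S] [Algebra R A] [Algebra R T]
    (f : S →ₐ[R] T) (g : A →ₐ[R] T) {a : A} (ha : g a ≠ 0) : (1 : S) ⊗ₜ[R] a ≠ 0 :=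
  fun h => ha (by simpa using congrArg (productMap f g) h)

theorem isDomain_of_isLocalization_right {R S A B : Type*} [CommRing R] [CommRing S]
    [CommRing A] [CommRing B] [Algebra R S] [Algebra R A] [Algebra R B] [Algebra A B]
    [IsScalarTower R A B] (M : Submonoid A) [IsLocalization M B] [IsDomain (S ⊗[R] A)]
    (hM : ∀ m ∈ M, (1 : S) ⊗ₜ[R] m ≠ 0) : IsDomain (S ⊗[R] B) := by
  let _ : Algebra (S ⊗[R] A) (S ⊗[R] B) :=
    (map (AlgHom.id R S) (IsScalarTower.toAlgHom R A B)).toAlgebra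
  have : IsScalarTower S (S ⊗[R] A) (S ⊗[R] B) :=
    .of_algebraMap_eq fun _ => by simp [RingHom.algebraMap_toAlgebra]
  have := IsLocalization.tensorProduct_tensorProduct_right R S M B
    (by ext; simp [RingHom.algebraMap_toAlgebra])
  refine IsLocalization.isDomain_of_le_nonZeroDivisors
    (M := M.map (includeRight (R := R) (A := S))) (S ⊗[R] B) ?_
  rintro _ ⟨m, hm, rfl⟩
  exact mem_nonZeroDivisors_of_ne_zero (hM m hm)

end Algebra.TensorProduct

open Algebra.TensorProduct in
theorem isDomain_fractionField_tensor_of_isDomain_tensor_general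
    {B A K L : Type*} [CommRing B] [CommRing A] [IsDomain A]
    [Algebra B A]
    [Field K] [Algebra B K] [IsFractionRing B K]
    [Field L] [Algebra A L] [IsFractionRing A L]
    [Algebra B L] [IsScalarTower B A L]
    [Algebra K L] [IsScalarTower B K L]
    (hdom : IsDomain (A ⊗[B] A)) :
    IsDomain (L ⊗[K] L) := by
  let ι : A →ₐ[B] L := IsScalarTower.toAlgHom B A L
  have hι : ∀ a ∈ nonZeroDivisors A, ι a ≠ 0 :=
    fun _ ha => IsFractionRing.to_map_ne_zero_of_mem_nonZeroDivisors ha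
  have : IsDomain (A ⊗[B] L) := isDomain_of_isLocalization_right (nonZeroDivisors A)
    fun a ha => one_tmul_ne_zero_of_map_ne_zero ι ι (hι a ha)
  have : IsDomain (L ⊗[B] A) := (Algebra.TensorProduct.comm B L A).toMulEquiv.isDomain _
  have : IsDomain (L ⊗[B] L) := isDomain_of_isLocalization_right (nonZeroDivisors A)
    fun a ha => one_tmul_ne_zero_of_map_ne_zero (AlgHom.id B L) ι (hι a ha)
  exact (IsLocalization.algebraTensorEquiv (nonZeroDivisors B) K L L).toMulEquiv.isDomain _

/-- Let `B → A` be an injective ring homomorphism between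
integral domains (making `A` a `B`-algebra). Let `K = Frac(B)` and
`L = Frac(A)`, with `L` a `K`-algebra via the embedding induced by `B → A`
(expressed by the scalar tower conditions). If `A ⊗[B] A` is an integral
domain, then `L ⊗[K] L` is an integral domain. -/
theorem isDomain_fractionField_tensor_of_isDomain_tensor
    {B A K L : Type*} [CommRing B] [CommRing A] [IsDomain B] [IsDomain A]
    [Algebra B A] (hinj : Function.Injective (algebraMap B A))
    [Field K] [Algebra B K] [IsFractionRing B K]
    [Field L] [Algebra A L] [IsFractionRing A L]
    [Algebra B L] [IsScalarTower B A L]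
    [Algebra K L] [IsScalarTower B K L]
    (hdom : IsDomain (A ⊗[B] A)) :
    IsDomain (L ⊗[K] L) :=
  isDomain_fractionField_tensor_of_isDomain_tensor_general hdom
end

section
/- Let E/F be a field extension such that the tensor product E ⊗_F E is an integral domain. If e ∈ E is algebraic over F, then e ∈ F. -/
/-!
The domain property of `E ⊗[F] E` passes to `K ⊗[F] K` for `K = F⟮e⟯`, since over a field tensor
products of injections are injective. Now `K ⊗[F] K` is a finite-dimensional domain over `F`,
hence a field, so the multiplication map `K ⊗[F] K → K` is injective and
`[K : F] ^ 2 ≤ [K : F]`, forcing `K = F`.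
-/

open scoped TensorProduct IntermediateField
open Module

namespace Algebra.TensorProduct

variable {F : Type*} [Field F]

theorem isDomain_of_injective {A A' B B' : Type*} [CommRing A] [CommRing A'] [CommRing B]
    [CommRing B'] [Algebra F A] [Algebra F A'] [Algebra F B] [Algebra F B']
    [IsDomain (B ⊗[F] B')] (f : A →ₐ[F] B) (g : A' →ₐ[F] B')
    (hf : Function.Injective f) (hg : Function.Injective g) : IsDomain (A ⊗[F] A') :=
  Function.Injective.isDomain (map f g).toRingHom
    (TensorProduct.map_injective_of_flat_flat f.toLinearMap g.toLinearMap hf hg)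

theorem finrank_eq_one_of_isDomain_self {A : Type*} [CommRing A] [Algebra F A]
    [FiniteDimensional F A] [IsDomain (A ⊗[F] A)] : finrank F A = 1 := by
  have hfield : IsField (A ⊗[F] A) := isField_of_isIntegral_of_isField' (Field.toIsField F)
  let _ : Field (A ⊗[F] A) := hfield.toField
  have hsq_pos : 0 < finrank F A * finrank F A := by
    rw [← finrank_tensorProduct]
    exact finrank_pos
  have : Nontrivial A := nontrivial_of_finrank_pos (Nat.pos_of_mul_pos_left hsq_pos)
  have hsq_le : finrank F A * finrank F A ≤ finrank F A := by
    rw [← finrank_tensorProduct]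
    exact LinearMap.finrank_le_finrank_of_injective (f := (lmul' F (S := A)).toLinearMap)
      (lmul' F (S := A)).toRingHom.injective
  nlinarith

end Algebra.TensorProduct

/-- If `E/F` is a field extension such that `E ⊗[F] E` is an
integral domain, then every element of `E` that is algebraic over `F` lies in
`F`. -/
theorem algebraic_mem_bot_of_isDomain_tensor
    {F E : Type*} [Field F] [Field E] [Algebra F E]
    (hdom : IsDomain (E ⊗[F] E))
    (e : E) (halg : IsAlgebraic F e) :
    e ∈ (algebraMap F E).range := by
  have : FiniteDimensional F F⟮e⟯ := IntermediateField.adjoin.finiteDimensional halg.isIntegral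
  have : IsDomain (F⟮e⟯ ⊗[F] F⟮e⟯) := Algebra.TensorProduct.isDomain_of_injective
    F⟮e⟯.val F⟮e⟯.val F⟮e⟯.val.injective F⟮e⟯.val.injective
  exact IntermediateField.mem_bot.mp <| IntermediateField.finrank_adjoin_simple_eq_one_iff.mp
    Algebra.TensorProduct.finrank_eq_one_of_isDomain_self
end

section
/- Let B and A be commutative integral domains and let B → A be an injective ring homomorphism making A a B-algebra. If the tensor product A ⊗_B A is an integral domain, then Frac(B) is algebraically closed in Frac(A): every element of Frac(A) that is algebraic over (the image of) Frac(B) lies in (the image of) Frac(B). -/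
/-!
Let `j : A ⊗[B] A → L ⊗[K] L` be the natural map. Clearing denominators, every element of
`L ⊗[K] L` has the form `j a / j b` with `j b` a unit. The two embeddings of `L` into
`Frac (A ⊗[B] A)` agree on `K`, so they define `φ : L ⊗[K] L → Frac (A ⊗[B] A)` with `φ ∘ j`
injective; hence `φ` is injective and `L ⊗[K] L` is a domain.

If `E` is the algebraic closure of `K` in `L`, then `E ⊗[K] E ⊆ L ⊗[K] L` is a domain that is
algebraic over `K`, hence a field. So `E` is linearly disjoint from itself, which forces `E = K`.
-/

open scoped TensorProduct

theorem RingHom.injective_of_injective_comp_of_exists_mul_eq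
    {R S T : Type*} [CommRing R] [CommRing S] [Ring T] (j : R →+* S) (φ : S →+* T)
    (hφj : Function.Injective (φ.comp j))
    (hj : ∀ x : S, ∃ a b : R, IsUnit (j b) ∧ j b * x = j a) :
    Function.Injective φ := by
  refine (injective_iff_map_eq_zero φ).mpr fun x hx ↦ ?_
  obtain ⟨a, b, hb, hab⟩ := hj x
  have ha : a = 0 := hφj <| by simp [← hab, hx]
  simpa [ha, hb.mul_right_eq_zero] using hab

namespace Algebra.TensorProduct

variable {B A K L : Type*} [CommRing B] [CommRing A] [Algebra B A]
    [Field K] [Algebra B K] [Field L] [Algebra A L] [Algebra B L] [IsScalarTower B A L]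
    [Algebra K L] [IsScalarTower B K L]

variable (B K L) in
noncomputable def mapAlgebraMap : A ⊗[B] A →ₐ[B] L ⊗[K] L :=
  productMap
    (((includeLeft : L →ₐ[K] L ⊗[K] L).restrictScalars B).comp (IsScalarTower.toAlgHom B A L))
    (((includeRight : L →ₐ[K] L ⊗[K] L).restrictScalars B).comp (IsScalarTower.toAlgHom B A L))

@[simp]
theorem mapAlgebraMap_tmul (a c : A) :
    mapAlgebraMap B K L (a ⊗ₜ c) = algebraMap A L a ⊗ₜ[K] algebraMap A L c := by
  simp [mapAlgebraMap]

theorem exists_mapAlgebraMap_mul_eq [IsFractionRing A L] (x : L ⊗[K] L) :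
    ∃ a b : A ⊗[B] A, IsUnit (mapAlgebraMap B K L b) ∧
      mapAlgebraMap B K L b * x = mapAlgebraMap B K L a := by
  induction x using TensorProduct.induction_on with
  | zero => exact ⟨0, 1, by simp⟩
  | tmul l l' =>
    obtain ⟨⟨a, s⟩, hs⟩ := IsLocalization.surj (nonZeroDivisors A) (S := L) l
    obtain ⟨⟨c, t⟩, ht⟩ := IsLocalization.surj (nonZeroDivisors A) (S := L) l'
    refine ⟨a ⊗ₜ c, s ⊗ₜ t, ?_, ?_⟩
    · simpa using ((IsLocalization.map_units L s).map (includeLeft : L →ₐ[K] L ⊗[K] L)).mul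
        ((IsLocalization.map_units L t).map (includeRight : L →ₐ[K] L ⊗[K] L))
    · simp only [mapAlgebraMap_tmul, tmul_mul_tmul, ← hs, ← ht, mul_comm]
  | add x y hx hy =>
    obtain ⟨a, b, hb, hab⟩ := hx
    obtain ⟨a', b', hb', hab'⟩ := hy
    refine ⟨b' * a + b * a', b * b', by simpa using hb.mul hb', ?_⟩
    simp only [map_add, map_mul, ← hab, ← hab']
    ring

theorem exists_ringHom_comp_mapAlgebraMap [IsFractionRing B K] [IsFractionRing A L]
    {F : Type*} [Field F] (ι : A ⊗[B] A →+* F) (hι : Function.Injective ι) :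
    ∃ φ : L ⊗[K] L →+* F, φ.comp (mapAlgebraMap B K L).toRingHom = ι := by
  have hinl : Function.Injective (ι.comp includeLeftRingHom) :=
    hι.comp <| Function.LeftInverse.injective (g := lmul' B) fun a ↦ by simp
  have hinr : Function.Injective (ι.comp (includeRight : A →ₐ[B] A ⊗[B] A).toRingHom) :=
    hι.comp <| Function.LeftInverse.injective (g := lmul' B) fun a ↦ by simp
  let g₁ : L →+* F := IsFractionRing.lift hinl
  let g₂ : L →+* F := IsFractionRing.lift hinr
  have hg₁ (a : A) : g₁ (algebraMap A L a) = ι (a ⊗ₜ 1) := IsFractionRing.lift_algebraMap _ _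
  have hg₂ (a : A) : g₂ (algebraMap A L a) = ι (1 ⊗ₜ a) := IsFractionRing.lift_algebraMap _ _
  have hK : g₁.comp (algebraMap K L) = g₂.comp (algebraMap K L) := by
    refine IsFractionRing.ringHom_ext (A := B) fun b ↦ ?_
    rw [RingHom.comp_apply, RingHom.comp_apply, ← IsScalarTower.algebraMap_apply,
      IsScalarTower.algebraMap_apply B A L, hg₁, hg₂, ← algebraMap_apply, algebraMap_apply']
  let _ : Algebra K F := (g₁.comp (algebraMap K L)).toAlgebra
  refine ⟨(productMap (⟨g₁, fun _ ↦ rfl⟩ : L →ₐ[K] F)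
    ⟨g₂, fun k ↦ (RingHom.congr_fun hK k).symm⟩).toRingHom, RingHom.ext fun w ↦ ?_⟩
  induction w using TensorProduct.induction_on with
  | zero => simp
  | tmul a c => simp [hg₁, hg₂, ← map_mul]
  | add x y hx hy => simp only [map_add, hx, hy]

theorem isDomain_of_isFractionRing [IsFractionRing B K] [IsFractionRing A L]
    [IsDomain (A ⊗[B] A)] : IsDomain (L ⊗[K] L) := by
  have hι := IsFractionRing.injective (A ⊗[B] A) (FractionRing (A ⊗[B] A))
  obtain ⟨φ, hφ⟩ := exists_ringHom_comp_mapAlgebraMap (K := K) (L := L) _ hι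
  exact (RingHom.injective_of_injective_comp_of_exists_mul_eq _ φ (hφ ▸ hι)
    exists_mapAlgebraMap_mul_eq).isDomain φ

end Algebra.TensorProduct

theorem algebraicClosure_eq_bot_of_isDomain_tensor {K L : Type*} [Field K] [Field L]
    [Algebra K L] [IsDomain (L ⊗[K] L)] : algebraicClosure K L = ⊥ := by
  set E := algebraicClosure K L
  have : IsDomain (E ⊗[K] E) :=
    (TensorProduct.map_injective_of_flat_flat E.val.toLinearMap E.val.toLinearMap
      Subtype.val_injective Subtype.val_injective).isDomain
      (Algebra.TensorProduct.map E.val E.val).toRingHom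
  have hfield : IsField (E ⊗[K] E) :=
    Algebra.TensorProduct.isField_of_isAlgebraic K E E (.inl inferInstance)
  simpa only [IntermediateField.fieldRange_val] using
    (IntermediateField.LinearDisjoint.of_isField' hfield E.val E.val).eq_bot_of_self

theorem fractionField_algebraically_closed_of_isDomain_tensor_general
    {B A K L : Type*} [CommRing B] [CommRing A]
    [Algebra B A]
    [Field K] [Algebra B K] [IsFractionRing B K]
    [Field L] [Algebra A L] [IsFractionRing A L]
    [Algebra B L] [IsScalarTower B A L]
    [Algebra K L] [IsScalarTower B K L]
    (hdom : IsDomain (A ⊗[B] A)) :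
    ∀ x : L, IsAlgebraic K x → x ∈ (algebraMap K L).range := by
  have : IsDomain (L ⊗[K] L) := Algebra.TensorProduct.isDomain_of_isFractionRing (B := B) (A := A)
  intro x hx
  rw [← mem_algebraicClosure_iff, algebraicClosure_eq_bot_of_isDomain_tensor] at hx
  exact IntermediateField.mem_bot.mp hx

/-- Let `B → A` be an injective ring homomorphism between
integral domains, let `K = Frac(B)` and `L = Frac(A)` with `L` a `K`-algebra
via the embedding induced by `B → A` (expressed by the scalar tower
conditions). If `A ⊗[B] A` is an integral domain, then `K` is algebraically
closed in `L`: every element of `L` algebraic over `K` lies in the image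
of `K`. -/
theorem fractionField_algebraically_closed_of_isDomain_tensor
    {B A K L : Type*} [CommRing B] [CommRing A] [IsDomain B] [IsDomain A]
    [Algebra B A] (hinj : Function.Injective (algebraMap B A))
    [Field K] [Algebra B K] [IsFractionRing B K]
    [Field L] [Algebra A L] [IsFractionRing A L]
    [Algebra B L] [IsScalarTower B A L]
    [Algebra K L] [IsScalarTower B K L]
    (hdom : IsDomain (A ⊗[B] A)) :
    ∀ x : L, IsAlgebraic K x → x ∈ (algebraMap K L).range :=
  fractionField_algebraically_closed_of_isDomain_tensor_general hdom
end

section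
/- Let p₁,p₂,p₃,q₁,q₂,q₃ ∈ ℂ² be such that p₁,p₂,p₃ are not collinear (the vectors p₂−p₁ and p₃−p₁ are linearly independent over ℂ), d(p₁,p₂) = d(q₁,q₂) ≠ 0, d(p₂,p₃) = d(q₂,q₃), and d(p₁,p₃) ≠ d(q₁,q₃). Define Γ := {(p₀,q₀) ∈ ℂ² × ℂ² : d(p₀,p_w) = d(q₀,q_w) for w = 1,2,3} and Γ' := {(p₀,q₀) ∈ Γ : there exists t ∈ T with t(p₀) = q₀, t(p₁) = q₁ and t(p₂) = q₂}. Then Γ' is irreducible and dim Γ = dim Γ' = 1, where subsets of ℂ² × ℂ² are regarded as subsets of ℂ⁴. -/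
noncomputable section

/-- A point of `ℂ² × ℂ²` viewed as a point of `ℂ⁴`. -/
def pt4 (p : (ℂ × ℂ) × (ℂ × ℂ)) : Fin 4 → ℂ := ![p.1.1, p.1.2, p.2.1, p.2.2]

/-- The vanishing ideal of a subset of `ℂ² × ℂ² = ℂ⁴` in `ℂ[x₁, x₂, x₃, x₄]`. -/
def vanIdeal4 (S : Set ((ℂ × ℂ) × (ℂ × ℂ))) : Ideal (MvPolynomial (Fin 4) ℂ) where
  carrier := {f | ∀ p ∈ S, MvPolynomial.eval (pt4 p) f = 0}
  add_mem' := by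
    intro a b ha hb p hp
    simp only [Set.mem_setOf_eq] at ha hb ⊢
    simp [map_add, ha p hp, hb p hp]
  zero_mem' := by intro p hp; simp
  smul_mem' := by
    intro c f hf p hp
    simp only [Set.mem_setOf_eq] at hf ⊢
    simp [smul_eq_mul, map_mul, hf p hp]

/-- A subset of `ℂ⁴` is irreducible if its vanishing ideal is prime. -/
def IsIrr4 (S : Set ((ℂ × ℂ) × (ℂ × ℂ))) : Prop := (vanIdeal4 S).IsPrime

/-- The dimension of a subset of `ℂ⁴`: the Krull dimension of the quotient of
`ℂ[x₁, x₂, x₃, x₄]` by its vanishing ideal. -/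
def dim4 (S : Set ((ℂ × ℂ) × (ℂ × ℂ))) : WithBot (WithTop ℕ) :=
  ringKrullDim (MvPolynomial (Fin 4) ℂ ⧸ vanIdeal4 S)

end

/-- `Γ` for three base points: pairs `(p₀, q₀)` with `d(p₀, p_w) = d(q₀, q_w)`
for `w = 1, 2, 3`. -/
def Gamma3 (p1 p2 p3 q1 q2 q3 : ℂ × ℂ) : Set ((ℂ × ℂ) × (ℂ × ℂ)) :=
  {pq | sd pq.1 p1 = sd pq.2 q1 ∧ sd pq.1 p2 = sd pq.2 q2 ∧
    sd pq.1 p3 = sd pq.2 q3}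

/-- `Γ'`: the pairs in `Γ` for which some transformation `t ∈ T` sends
`(p₀, p₁, p₂)` to `(q₀, q₁, q₂)`. -/
def Gamma3' (p1 p2 p3 q1 q2 q3 : ℂ × ℂ) : Set ((ℂ × ℂ) × (ℂ × ℂ)) :=
  {pq ∈ Gamma3 p1 p2 p3 q1 q2 q3 |
    ∃ t, IsTransf t ∧ t pq.1 = pq.2 ∧ t p1 = q1 ∧ t p2 = q2}

/-!
When `d(p₁, p₂) = d(q₁, q₂) ≠ 0` there are exactly two isometries of `ℂ²` taking `(p₁, p₂)` to
`(q₁, q₂)`: a proper one `t₊`, the only such element of `T`, and an improper one `t₋`. A vector is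
determined by its dot and cross products with the non-isotropic vector `q₂ - q₁`, and by
Lagrange's identity the first two equations of `Γ` fix these up to the sign of the cross product;
hence they say `q₀ = t₊ p₀` or `q₀ = t₋ p₀`. Over each branch the third equation reads
`d(p₀, p₃) = d(p₀, t⁻¹ q₃)`, a perpendicular bisector, which is a line because `t p₃ ≠ q₃` by
`d(p₁, p₃) ≠ d(q₁, q₃)`. So `Γ'` is a line in `ℂ⁴` and `Γ` is a union of two lines.
-/

theorem Order.krullDim_union_le_of_isUpperSet {α : Type*} [Preorder α] {S T : Set α}
    (hS : IsUpperSet S) (hT : IsUpperSet T) :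
    Order.krullDim ↥(S ∪ T) ≤ max (Order.krullDim S) (Order.krullDim T) := by
  refine iSup_le fun p => ?_
  have length_le {U : Set α} (hU : IsUpperSet U) (hp : (p.head : α) ∈ U) :
      (p.length : WithBot ℕ∞) ≤ Order.krullDim U :=
    Order.LTSeries.length_le_krullDim
      ⟨p.length, fun i => ⟨p i, hU (p.monotone (Fin.zero_le i)) hp⟩, fun i => p.step i⟩
  rcases p.head.2 with h | h
  · exact (length_le hS h).trans le_sup_left
  · exact (length_le hT h).trans le_sup_right

theorem ringKrullDim_quotient_inf_le {R : Type*} [CommRing R] (I J : Ideal R) :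
    ringKrullDim (R ⧸ (I ⊓ J)) ≤ max (ringKrullDim (R ⧸ I)) (ringKrullDim (R ⧸ J)) := by
  have isUpperSet_zeroLocus (K : Ideal R) : IsUpperSet (PrimeSpectrum.zeroLocus (K : Set R)) :=
    fun _ _ hle hK => Set.Subset.trans hK hle
  rw [ringKrullDim_quotient, ringKrullDim_quotient, ringKrullDim_quotient,
    PrimeSpectrum.zeroLocus_inf]
  exact Order.krullDim_union_le_of_isUpperSet (isUpperSet_zeroLocus I) (isUpperSet_zeroLocus J)

theorem ringKrullDim_quotient_le_of_le {R : Type*} [CommRing R] {I J : Ideal R} (h : I ≤ J) :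
    ringKrullDim (R ⧸ J) ≤ ringKrullDim (R ⧸ I) :=
  ringKrullDim_le_of_surjective _ (Ideal.Quotient.factor_surjective h)

theorem vanIdeal4_antitone {S T : Set ((ℂ × ℂ) × (ℂ × ℂ))} (h : S ⊆ T) :
    vanIdeal4 T ≤ vanIdeal4 S :=
  fun _ hf p hp => hf p (h hp)

theorem vanIdeal4_union (S T : Set ((ℂ × ℂ) × (ℂ × ℂ))) :
    vanIdeal4 (S ∪ T) = vanIdeal4 S ⊓ vanIdeal4 T :=
  le_antisymm (le_inf (vanIdeal4_antitone Set.subset_union_left)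
      (vanIdeal4_antitone Set.subset_union_right))
    fun _ ⟨hS, hT⟩ p hp => hp.elim (hS p) (hT p)

theorem dim4_mono {S T : Set ((ℂ × ℂ) × (ℂ × ℂ))} (h : S ⊆ T) : dim4 S ≤ dim4 T :=
  ringKrullDim_quotient_le_of_le (vanIdeal4_antitone h)

theorem dim4_union_le (S T : Set ((ℂ × ℂ) × (ℂ × ℂ))) :
    dim4 (S ∪ T) ≤ max (dim4 S) (dim4 T) := by
  rw [dim4, vanIdeal4_union]
  exact ringKrullDim_quotient_inf_le _ _

section Curves

open Polynomial

theorem vanIdeal4_range_eq_ker {φ : ℂ → (ℂ × ℂ) × (ℂ × ℂ)} (Φ : Fin 4 → ℂ[X])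
    (hφ : ∀ r, pt4 (φ r) = fun j => (Φ j).eval r) :
    vanIdeal4 (Set.range φ) = RingHom.ker (MvPolynomial.aeval Φ) := by
  have eval_aeval (f : MvPolynomial (Fin 4) ℂ) (r : ℂ) :
      (MvPolynomial.aeval Φ f).eval r = MvPolynomial.eval (pt4 (φ r)) f := by
    rw [hφ, ← coe_aeval_eq_eval, ← AlgHom.comp_apply, MvPolynomial.comp_aeval]
    rfl
  ext f
  simp only [vanIdeal4, Submodule.mem_mk, AddSubmonoid.mem_mk, AddSubsemigroup.mem_mk,
    Set.mem_ofPred_eq, Set.forall_mem_range, RingHom.mem_ker, ← eval_aeval]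
  exact ⟨fun h => Polynomial.funext fun r => by simpa using h r, fun h r => by simp [h]⟩

theorem pt4_smul_add (r : ℂ) (a b : (ℂ × ℂ) × (ℂ × ℂ)) :
    pt4 (r • a + b) = fun j => pt4 a j * r + pt4 b j := by
  funext j
  fin_cases j <;> simp [pt4, mul_comm]

theorem isIrr4_and_dim4_range_line {a : (ℂ × ℂ) × (ℂ × ℂ)} (ha : a ≠ 0)
    (b : (ℂ × ℂ) × (ℂ × ℂ)) :
    IsIrr4 (Set.range fun r : ℂ => r • a + b) ∧ dim4 (Set.range fun r : ℂ => r • a + b) = 1 := by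
  set Φ : Fin 4 → ℂ[X] := fun j => C (pt4 a j) * X + C (pt4 b j)
  have hker := vanIdeal4_range_eq_ker (φ := fun r => r • a + b) Φ fun r => by
    simp [Φ, pt4_smul_add]
  obtain ⟨j, hj⟩ : ∃ j, pt4 a j ≠ 0 := by
    by_contra! h
    exact ha (by ext <;> [exact h 0; exact h 1; exact h 2; exact h 3])
  have hX : MvPolynomial.aeval Φ (MvPolynomial.C (pt4 a j)⁻¹ * (MvPolynomial.X j -
      MvPolynomial.C (pt4 b j))) = X := by
    simp [Φ, ← mul_assoc, ← C_mul, inv_mul_cancel₀ hj]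
  have hsurj : Function.Surjective (MvPolynomial.aeval Φ) := fun p =>
    ⟨aeval _ p, by rw [← aeval_algHom_apply, hX, aeval_X_left_apply]⟩
  refine ⟨by rw [IsIrr4, hker]; exact RingHom.ker_isPrime _, ?_⟩
  rw [dim4, hker,
    ringKrullDim_eq_of_ringEquiv (Ideal.quotientKerAlgEquivOfSurjective hsurj).toRingEquiv,
    Polynomial.ringKrullDim_of_isNoetherianRing, ringKrullDim_eq_zero_of_field, zero_add]
  rfl

end Curves

def dot (x y : ℂ × ℂ) : ℂ := x.1 * y.1 + x.2 * y.2

def cross (x y : ℂ × ℂ) : ℂ := x.1 * y.2 - x.2 * y.1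

theorem dot_sq_add_cross_sq (x y : ℂ × ℂ) : dot x y ^ 2 + cross x y ^ 2 = dot x x * dot y y := by
  simp only [dot, cross]
  ring

theorem eq_of_dot_eq_of_cross_eq {a b w : ℂ × ℂ} (hw : dot w w ≠ 0) (hdot : dot a w = dot b w)
    (hcross : cross a w = cross b w) : a = b := by
  have expand (x : ℂ × ℂ) : dot w w * x.1 = dot x w * w.1 + cross x w * w.2 ∧
      dot w w * x.2 = dot x w * w.2 - cross x w * w.1 := by
    simp only [dot, cross]
    constructor <;> ring
  ext <;> apply mul_left_cancel₀ hw
  · rw [(expand a).1, (expand b).1, hdot, hcross]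
  · rw [(expand a).2, (expand b).2, hdot, hcross]

theorem sd_eq_dot (x y : ℂ × ℂ) : sd x y = dot (x - y) (x - y) := by
  simp only [sd, dot, Prod.fst_sub, Prod.snd_sub]
  ring

theorem sd_comm (x y : ℂ × ℂ) : sd x y = sd y x := by
  simp only [sd]
  ring

theorem exists_cross_eq_one {n : ℂ × ℂ} (hn : n ≠ 0) : ∃ m, cross n m = 1 := by
  by_cases h1 : n.1 = 0
  · have h2 : n.2 ≠ 0 := fun h2 => hn (Prod.ext h1 h2)
    exact ⟨(-n.2⁻¹, 0), by simp [cross, h2]⟩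
  · exact ⟨(0, n.1⁻¹), by simp [cross, h1]⟩

theorem setOf_dot_eq_eq_range {n : ℂ × ℂ} (hn : n ≠ 0) (C : ℂ) :
    ∃ α ≠ 0, ∃ β, {x | dot n x = C} = Set.range fun k : ℂ => k • α + β := by
  obtain ⟨m, hm⟩ := exists_cross_eq_one hn
  -- `x = (m ⬝ x) • (-n.2, n.1) + (n ⬝ x) • (m.2, -m.1)`, as `n, m` have determinant `1`
  refine ⟨(-n.2, n.1), fun h => hn ?_, C • (m.2, -m.1), ?_⟩
  · exact Prod.ext (by simpa using congrArg Prod.snd h) (by simpa using congrArg Prod.fst h)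
  ext x
  simp only [Set.mem_ofPred_eq, Set.mem_range, dot, cross] at hm ⊢
  constructor
  · intro hx
    refine ⟨dot m x, Prod.ext ?_ ?_⟩ <;> simp only [dot, Prod.fst_add, Prod.snd_add,
      Prod.smul_fst, Prod.smul_snd, smul_eq_mul]
    · linear_combination x.1 * hm - m.2 * hx
    · linear_combination x.2 * hm + m.1 * hx
  · rintro ⟨k, rfl⟩
    simp only [Prod.fst_add, Prod.snd_add, Prod.smul_fst, Prod.smul_snd, smul_eq_mul]
    linear_combination C * hm

theorem setOf_sd_eq_sd_eq_range {p r : ℂ × ℂ} (hpr : p ≠ r) :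
    ∃ α ≠ 0, ∃ β, {x | sd x p = sd x r} = Set.range fun k : ℂ => k • α + β := by
  have hbisector : {x | sd x p = sd x r} = {x | dot (r - p) x = (dot r r - dot p p) / 2} := by
    ext x
    simp only [Set.mem_ofPred_eq, sd, dot, Prod.fst_sub, Prod.snd_sub]
    constructor
    · intro h
      linear_combination (1 / 2 : ℂ) * h
    · intro h
      linear_combination 2 * h
  rw [hbisector]
  exact setOf_dot_eq_eq_range (sub_ne_zero.mpr hpr.symm) _

/-- The affine map `x ↦ R x + u` with `R = [[c, -ε s], [s, ε c]]`: when `c ^ 2 + s ^ 2 = 1` it is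
a proper isometry for `ε = 1` and an improper one for `ε = -1`. -/
def isom (ε c s : ℂ) (u x : ℂ × ℂ) : ℂ × ℂ :=
  (c * x.1 - ε * s * x.2 + u.1, s * x.1 + ε * c * x.2 + u.2)

section Isometry

variable {ε c s : ℂ}

theorem dot_isom_sub_isom (hcs : c ^ 2 + s ^ 2 = 1) (hε : ε ^ 2 = 1) (u x y z w : ℂ × ℂ) :
    dot (isom ε c s u x - isom ε c s u y) (isom ε c s u z - isom ε c s u w) =
      dot (x - y) (z - w) := by
  simp only [dot, isom, Prod.fst_sub, Prod.snd_sub]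
  linear_combination ((x.1 - y.1) * (z.1 - w.1) + ε ^ 2 * (x.2 - y.2) * (z.2 - w.2)) * hcs +
    (x.2 - y.2) * (z.2 - w.2) * hε

theorem cross_isom_sub_isom (hcs : c ^ 2 + s ^ 2 = 1) (u x y z w : ℂ × ℂ) :
    cross (isom ε c s u x - isom ε c s u y) (isom ε c s u z - isom ε c s u w) =
      ε * cross (x - y) (z - w) := by
  simp only [cross, isom, Prod.fst_sub, Prod.snd_sub]
  linear_combination ε * ((x.1 - y.1) * (z.2 - w.2) - (x.2 - y.2) * (z.1 - w.1)) * hcs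

theorem sd_isom (hcs : c ^ 2 + s ^ 2 = 1) (hε : ε ^ 2 = 1) (u x y : ℂ × ℂ) :
    sd (isom ε c s u x) (isom ε c s u y) = sd x y := by
  rw [sd_eq_dot, sd_eq_dot, dot_isom_sub_isom hcs hε]

theorem isom_surjective (hcs : c ^ 2 + s ^ 2 = 1) (hε : ε ^ 2 = 1) (u : ℂ × ℂ) :
    Function.Surjective (isom ε c s u) := fun y => by
  refine ⟨(c * (y.1 - u.1) + s * (y.2 - u.2), ε * (c * (y.2 - u.2) - s * (y.1 - u.1))), ?_⟩
  ext <;> simp only [isom]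
  · linear_combination (y.1 - u.1) * hcs + s * (s * (y.1 - u.1) - c * (y.2 - u.2)) * hε
  · linear_combination (y.2 - u.2) * hcs + c * (c * (y.2 - u.2) - s * (y.1 - u.1)) * hε

theorem isom_smul_add (u α β : ℂ × ℂ) (k : ℂ) :
    isom ε c s u (k • α + β) = k • (isom ε c s u α - isom ε c s u 0) + isom ε c s u β := by
  ext <;> simp only [isom, Prod.fst_add, Prod.snd_add, Prod.fst_sub, Prod.snd_sub, Prod.smul_fst,
    Prod.smul_snd, Prod.fst_zero, Prod.snd_zero, smul_eq_mul] <;> ring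

end Isometry

theorem exists_isom {ε : ℂ} (hε : ε ^ 2 = 1) {p1 p2 q1 q2 : ℂ × ℂ} (h12 : sd p1 p2 = sd q1 q2)
    (hne : sd p1 p2 ≠ 0) :
    ∃ c s u, c ^ 2 + s ^ 2 = 1 ∧ isom ε c s u p1 = q1 ∧ isom ε c s u p2 = q2 := by
  obtain ⟨v, rfl⟩ : ∃ v, p2 = p1 + v := ⟨p2 - p1, by abel⟩
  obtain ⟨w, rfl⟩ : ∃ w, q2 = q1 + w := ⟨q2 - q1, by abel⟩
  simp only [sd, Prod.fst_add, Prod.snd_add, sub_add_cancel_left, neg_sq] at h12 hne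
  obtain ⟨c, hc⟩ : ∃ c, c = (v.1 * w.1 + ε * v.2 * w.2) / (v.1 ^ 2 + v.2 ^ 2) := ⟨_, rfl⟩
  obtain ⟨s, hs⟩ : ∃ s, s = (v.1 * w.2 - ε * v.2 * w.1) / (v.1 ^ 2 + v.2 ^ 2) := ⟨_, rfl⟩
  -- `(c, s)` is the rotation taking `(v.1, ε * v.2)` to `w`
  refine ⟨c, s, q1 - isom ε c s 0 p1, ?_, by ext <;> simp [isom], ?_⟩
  all_goals subst c s
  · field_simp
    linear_combination -(v.1 ^ 2 + v.2 ^ 2) * h12 + v.2 ^ 2 * (w.1 ^ 2 + w.2 ^ 2) * hε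
  · ext <;> simp only [isom, Prod.fst_add, Prod.snd_add, Prod.fst_sub, Prod.snd_sub,
      Prod.fst_zero, Prod.snd_zero] <;> field_simp
    · linear_combination w.1 * v.2 ^ 2 * hε
    · linear_combination w.2 * v.2 ^ 2 * hε

theorem isTransf_iff (t : ℂ × ℂ → ℂ × ℂ) :
    IsTransf t ↔ ∃ c s u, c ^ 2 + s ^ 2 = 1 ∧ t = isom 1 c s u := by
  constructor
  · rintro ⟨c, s, u, v, hcs, ht⟩
    exact ⟨c, s, (u, v), hcs, funext fun x => by simp [ht, isom]⟩
  · rintro ⟨c, s, u, hcs, rfl⟩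
    exact ⟨c, s, u.1, u.2, hcs, fun x => by simp [isom]⟩

section Characterization

variable {p1 p2 q1 q2 P Q : ℂ × ℂ}

theorem dot_sub_eq_of_sd_eq (h12 : sd p1 p2 = sd q1 q2) (h1 : sd P p1 = sd Q q1)
    (h2 : sd P p2 = sd Q q2) : dot (Q - q1) (q2 - q1) = dot (P - p1) (p2 - p1) := by
  simp only [sd, dot, Prod.fst_sub, Prod.snd_sub] at *
  linear_combination (h2 - h1 - h12) / 2

theorem cross_sq_eq_of_sd_eq (h12 : sd p1 p2 = sd q1 q2) (h1 : sd P p1 = sd Q q1)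
    (h2 : sd P p2 = sd Q q2) :
    cross (Q - q1) (q2 - q1) ^ 2 = cross (P - p1) (p2 - p1) ^ 2 := by
  have hdot := dot_sub_eq_of_sd_eq h12 h1 h2
  have lagrangeQ := dot_sq_add_cross_sq (Q - q1) (q2 - q1)
  have lagrangeP := dot_sq_add_cross_sq (P - p1) (p2 - p1)
  rw [← sd_eq_dot, ← sd_eq_dot, ← h1, sd_comm q2, ← h12, sd_comm p1] at lagrangeQ
  rw [← sd_eq_dot, ← sd_eq_dot] at lagrangeP
  linear_combination
    lagrangeQ - lagrangeP - (dot (Q - q1) (q2 - q1) + dot (P - p1) (p2 - p1)) * hdot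

theorem eq_isom_of_sd_eq_of_cross_eq {ε c s : ℂ} {u : ℂ × ℂ} (hcs : c ^ 2 + s ^ 2 = 1)
    (hε : ε ^ 2 = 1) (ht1 : isom ε c s u p1 = q1) (ht2 : isom ε c s u p2 = q2)
    (hne : sd p1 p2 ≠ 0) (h1 : sd P p1 = sd Q q1) (h2 : sd P p2 = sd Q q2)
    (hcross : cross (Q - q1) (q2 - q1) = ε * cross (P - p1) (p2 - p1)) :
    Q = isom ε c s u P := by
  have h12 : sd p1 p2 = sd q1 q2 := by rw [← ht1, ← ht2, sd_isom hcs hε]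
  have hw : dot (q2 - q1) (q2 - q1) ≠ 0 := by rwa [← sd_eq_dot, sd_comm, ← h12]
  rw [← sub_left_inj (a := q1)]
  refine eq_of_dot_eq_of_cross_eq hw ?_ ?_ <;> rw [← ht1, ← ht2]
  · rw [dot_isom_sub_isom hcs hε, ht1, ht2, dot_sub_eq_of_sd_eq h12 h1 h2]
  · rw [cross_isom_sub_isom hcs, ht1, ht2, hcross]

theorem sd_eq_sd_iff_eq_isom_or_eq_isom {c s c' s' : ℂ} {u u' : ℂ × ℂ}
    (hcs : c ^ 2 + s ^ 2 = 1) (ht1 : isom 1 c s u p1 = q1) (ht2 : isom 1 c s u p2 = q2)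
    (hcs' : c' ^ 2 + s' ^ 2 = 1) (ht1' : isom (-1) c' s' u' p1 = q1)
    (ht2' : isom (-1) c' s' u' p2 = q2) (hne : sd p1 p2 ≠ 0) :
    sd P p1 = sd Q q1 ∧ sd P p2 = sd Q q2 ↔ Q = isom 1 c s u P ∨ Q = isom (-1) c' s' u' P := by
  constructor
  · rintro ⟨h1, h2⟩
    have h12 : sd p1 p2 = sd q1 q2 := by rw [← ht1, ← ht2, sd_isom hcs (one_pow 2)]
    rcases sq_eq_sq_iff_eq_or_eq_neg.mp (cross_sq_eq_of_sd_eq h12 h1 h2) with hcross | hcross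
    · exact .inl (eq_isom_of_sd_eq_of_cross_eq hcs (one_pow 2) ht1 ht2 hne h1 h2
        (by rw [hcross, one_mul]))
    · exact .inr (eq_isom_of_sd_eq_of_cross_eq hcs' (by norm_num) ht1' ht2' hne h1 h2
        (by rw [hcross, neg_one_mul]))
  · rintro (rfl | rfl)
    · rw [← ht1, ← ht2, sd_isom hcs (one_pow 2), sd_isom hcs (one_pow 2)]
      exact ⟨rfl, rfl⟩
    · rw [← ht1', ← ht2', sd_isom hcs' (by norm_num), sd_isom hcs' (by norm_num)]
      exact ⟨rfl, rfl⟩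

end Characterization

def gammaBranch (t : ℂ × ℂ → ℂ × ℂ) (p3 q3 : ℂ × ℂ) : Set ((ℂ × ℂ) × (ℂ × ℂ)) :=
  {pq | pq.2 = t pq.1 ∧ sd pq.1 p3 = sd pq.2 q3}

section Branches

variable {p1 p2 p3 q1 q2 q3 : ℂ × ℂ} {c s : ℂ} {u : ℂ × ℂ}

theorem gamma3_eq_union {c' s' : ℂ} {u' : ℂ × ℂ}
    (hcs : c ^ 2 + s ^ 2 = 1) (ht1 : isom 1 c s u p1 = q1) (ht2 : isom 1 c s u p2 = q2)
    (hcs' : c' ^ 2 + s' ^ 2 = 1) (ht1' : isom (-1) c' s' u' p1 = q1)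
    (ht2' : isom (-1) c' s' u' p2 = q2) (hne : sd p1 p2 ≠ 0) :
    Gamma3 p1 p2 p3 q1 q2 q3 =
      gammaBranch (isom 1 c s u) p3 q3 ∪ gammaBranch (isom (-1) c' s' u') p3 q3 := by
  ext ⟨P, Q⟩
  simp only [Gamma3, gammaBranch, Set.mem_union, Set.mem_ofPred_eq, ← and_assoc,
    sd_eq_sd_iff_eq_isom_or_eq_isom hcs ht1 ht2 hcs' ht1' ht2' hne, or_and_right]

theorem gamma3'_eq_gammaBranch (hcs : c ^ 2 + s ^ 2 = 1) (ht1 : isom 1 c s u p1 = q1)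
    (ht2 : isom 1 c s u p2 = q2) (hne : sd p1 p2 ≠ 0) :
    Gamma3' p1 p2 p3 q1 q2 q3 = gammaBranch (isom 1 c s u) p3 q3 := by
  ext ⟨P, Q⟩
  constructor
  · rintro ⟨⟨h1, h2, h3⟩, t, ht, htP, htp1, htp2⟩
    obtain ⟨c₀, s₀, u₀, hcs₀, rfl⟩ := (isTransf_iff t).mp ht
    refine ⟨eq_isom_of_sd_eq_of_cross_eq hcs (one_pow 2) ht1 ht2 hne h1 h2 ?_, h3⟩
    rw [← htP, ← htp1, ← htp2, cross_isom_sub_isom hcs₀]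
  · rintro ⟨hQ : Q = isom 1 c s u P, h3⟩
    subst hQ
    refine ⟨⟨?_, ?_, h3⟩, _, (isTransf_iff _).mpr ⟨c, s, u, hcs, rfl⟩, rfl, ht1, ht2⟩
    · rw [← ht1, sd_isom hcs (one_pow 2)]
    · rw [← ht2, sd_isom hcs (one_pow 2)]

theorem gammaBranch_eq_range_line {ε : ℂ} (hcs : c ^ 2 + s ^ 2 = 1) (hε : ε ^ 2 = 1)
    (h3 : isom ε c s u p3 ≠ q3) :
    ∃ a ≠ 0, ∃ b, gammaBranch (isom ε c s u) p3 q3 = Set.range fun k : ℂ => k • a + b := by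
  obtain ⟨r3, rfl⟩ := isom_surjective hcs hε u q3
  obtain ⟨α, hα, β, hbisector⟩ := setOf_sd_eq_sd_eq_range fun h : p3 = r3 => h3 (h ▸ rfl)
  refine ⟨(α, isom ε c s u α - isom ε c s u 0), fun h => hα (congrArg Prod.fst h),
    (β, isom ε c s u β), ?_⟩
  ext ⟨P, Q⟩
  have hP := Set.ext_iff.mp hbisector P
  simp only [gammaBranch, Set.mem_ofPred_eq, Set.mem_range] at hP ⊢
  constructor
  · rintro ⟨rfl, hsd⟩
    obtain ⟨k, rfl⟩ := hP.mp (by rwa [sd_isom hcs hε] at hsd)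
    exact ⟨k, by rw [isom_smul_add]; rfl⟩
  · rintro ⟨k, hk⟩
    simp only [Prod.smul_mk, Prod.mk_add_mk, Prod.mk.injEq] at hk
    obtain ⟨rfl, rfl⟩ := hk
    rw [← isom_smul_add, sd_isom hcs hε]
    exact ⟨rfl, hP.mpr ⟨k, rfl⟩⟩

theorem isIrr4_and_dim4_gammaBranch {ε : ℂ} (hcs : c ^ 2 + s ^ 2 = 1) (hε : ε ^ 2 = 1)
    (h3 : isom ε c s u p3 ≠ q3) :
    IsIrr4 (gammaBranch (isom ε c s u) p3 q3) ∧ dim4 (gammaBranch (isom ε c s u) p3 q3) = 1 := by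
  obtain ⟨a, ha, b, hline⟩ := gammaBranch_eq_range_line hcs hε h3
  rw [hline]
  exact isIrr4_and_dim4_range_line ha b

end Branches

theorem gamma_three_points_two_equal_lengths_general (p1 p2 p3 q1 q2 q3 : ℂ × ℂ)
    (h12 : sd p1 p2 = sd q1 q2) (h12ne : sd p1 p2 ≠ 0)
    (h13 : sd p1 p3 ≠ sd q1 q3) :
    IsIrr4 (Gamma3' p1 p2 p3 q1 q2 q3) ∧
    dim4 (Gamma3 p1 p2 p3 q1 q2 q3) = 1 ∧
    dim4 (Gamma3' p1 p2 p3 q1 q2 q3) = 1 := by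
  have moves_p3 {ε c s : ℂ} {u : ℂ × ℂ} (hcs : c ^ 2 + s ^ 2 = 1) (hε : ε ^ 2 = 1)
      (ht1 : isom ε c s u p1 = q1) : isom ε c s u p3 ≠ q3 := fun h =>
    h13 (by rw [← ht1, ← h, sd_isom hcs hε])
  have hneg : (-1 : ℂ) ^ 2 = 1 := by norm_num
  obtain ⟨c, s, u, hcs, ht1, ht2⟩ := exists_isom (one_pow 2) h12 h12ne
  obtain ⟨c', s', u', hcs', ht1', ht2'⟩ := exists_isom hneg h12 h12ne
  obtain ⟨hirr, hdim⟩ :=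
    isIrr4_and_dim4_gammaBranch hcs (one_pow 2) (moves_p3 hcs (one_pow 2) ht1)
  have hdim' := (isIrr4_and_dim4_gammaBranch hcs' hneg (moves_p3 hcs' hneg ht1')).2
  rw [gamma3'_eq_gammaBranch hcs ht1 ht2 h12ne, gamma3_eq_union hcs ht1 ht2 hcs' ht1' ht2' h12ne]
  refine ⟨hirr, le_antisymm ?_ (hdim ▸ dim4_mono Set.subset_union_left), hdim⟩
  calc dim4 (_ ∪ _) ≤ max _ _ := dim4_union_le _ _
    _ = 1 := by rw [hdim, hdim', max_self]

/-- If `p₁, p₂, p₃` are not collinear,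
`d(p₁, p₂) = d(q₁, q₂) ≠ 0`, `d(p₂, p₃) = d(q₂, q₃)` and
`d(p₁, p₃) ≠ d(q₁, q₃)`, then `Γ'` is irreducible and `dim Γ = dim Γ' = 1`. -/
theorem gamma_three_points_two_equal_lengths (p1 p2 p3 q1 q2 q3 : ℂ × ℂ)
    (hcol : LinearIndependent ℂ ![p2 - p1, p3 - p1])
    (h12 : sd p1 p2 = sd q1 q2) (h12ne : sd p1 p2 ≠ 0)
    (h23 : sd p2 p3 = sd q2 q3)
    (h13 : sd p1 p3 ≠ sd q1 q3) :
    IsIrr4 (Gamma3' p1 p2 p3 q1 q2 q3) ∧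
    dim4 (Gamma3 p1 p2 p3 q1 q2 q3) = 1 ∧
    dim4 (Gamma3' p1 p2 p3 q1 q2 q3) = 1 :=
  gamma_three_points_two_equal_lengths_general p1 p2 p3 q1 q2 q3 h12 h12ne h13
end
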